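/- arXiv:2207.08595 — 2 statements merged into one kernel-verified Lean document; each statement's English description precedes it below -/
import Mathlib

section
/- If X is a star-Lindelöf topological space and Y is a subset of X of cardinality less than 𝔡 (the dominating number), then Y is star-Scheepers in X; that is, for each sequence (U_n) of open covers of X there exists a sequence (V_n) such that each V_n is a finite subset of U_n and for each finite set F ⊆ Y there exists n with F ⊆ St(⋃V_n, U_n). -/
open Set

/-- The dominating number 𝔡: least cardinality of a dominating family in ℕ^ℕ. -/
noncomputable def dominatingNumber : Cardinal :=
  sInf { c | ∃ D : Set (ℕ → ℕ),
    (∀ g : ℕ → ℕ, ∃ f ∈ D, ∀ᶠ n in Filter.atTop, g n ≤ f n) ∧ c = Cardinal.mk D }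

/-- `U` is an open cover of the space `X`. -/
def IsOpenCover {X : Type u} [TopologicalSpace X] (U : Set (Set X)) : Prop :=
  (∀ u ∈ U, IsOpen u) ∧ ⋃₀ U = Set.univ

/-- The star of a set `A` with respect to a family `U`. -/
def starOf {X : Type*} (A : Set X) (U : Set (Set X)) : Set X :=
  ⋃₀ {B | B ∈ U ∧ (A ∩ B).Nonempty}

/-- The star-Scheepers property (ω-cover form). -/
def StarScheepers (X : Type*) [TopologicalSpace X] : Prop :=
  ∀ U : ℕ → Set (Set X), (∀ n, IsOpenCover (U n)) →
    ∃ V : ℕ → Set (Set X), (∀ n, V n ⊆ U n ∧ (V n).Finite) ∧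
      ∀ F : Set X, F.Finite → ∃ n, F ⊆ starOf (⋃₀ V n) (U n)

/-- The strongly star-Scheepers property. -/
def StronglyStarScheepers (X : Type*) [TopologicalSpace X] : Prop :=
  ∀ U : ℕ → Set (Set X), (∀ n, IsOpenCover (U n)) →
    ∃ F : ℕ → Set X, (∀ n, (F n).Finite) ∧
      ∀ G : Set X, G.Finite → ∃ n, G ⊆ starOf (F n) (U n)

universe u

open Filter in
lemma countable_not_dominating (D : Set (ℕ → ℕ)) (hD : D.Countable) :
    ¬ ∀ g : ℕ → ℕ, ∃ f ∈ D, ∀ᶠ n in atTop, g n ≤ f n := by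
  intro h
  rcases D.eq_empty_or_nonempty with rfl | hne
  · obtain ⟨f, hf, -⟩ := h 0
    exact hf
  · obtain ⟨d, rfl⟩ := hD.exists_eq_range hne
    set g : ℕ → ℕ := fun n => (Finset.range (n+1)).sup (fun i => d i n) + 1 with hg
    obtain ⟨f, ⟨i, rfl⟩, hev⟩ := h g
    have h2 : ∀ᶠ n in atTop, d i n < g n := by
      filter_upwards [eventually_ge_atTop i] with n hn
      have : d i n ≤ (Finset.range (n+1)).sup (fun j => d j n) :=
        Finset.le_sup (f := fun j => d j n) (Finset.mem_range.2 (Nat.lt_succ_of_le hn))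
      simp only [hg]; omega
    obtain ⟨n, ha, hb⟩ := (hev.and h2).exists
    omega

open Filter in
lemma aleph0_lt_dominatingNumber : Cardinal.aleph0 < dominatingNumber := by
  have hS : { c | ∃ D : Set (ℕ → ℕ),
      (∀ g : ℕ → ℕ, ∃ f ∈ D, ∀ᶠ n in Filter.atTop, g n ≤ f n) ∧ c = Cardinal.mk D }.Nonempty :=
    ⟨Cardinal.mk (Set.univ : Set (ℕ → ℕ)), Set.univ,
      fun g => ⟨g, trivial, Filter.Eventually.of_forall fun n => le_rfl⟩, rfl⟩
  have hmem := csInf_mem hS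
  obtain ⟨D, hdom, hc⟩ := hmem
  by_contra hle
  push_neg at hle
  have h1 : Cardinal.mk D ≤ Cardinal.aleph0 := hc ▸ hle
  have : D.Countable := Set.countable_coe_iff.mp (Cardinal.mk_le_aleph0_iff.mp h1)
  exact countable_not_dominating D this hdom

open Filter in
lemma exists_unbounded {ι : Type u} (f : ι → ℕ → ℕ)
    (h : Cardinal.lift.{0} (Cardinal.mk ι) < Cardinal.lift.{u} dominatingNumber) :
    ∃ g : ℕ → ℕ, ∀ i, ∃ᶠ n in atTop, f i n < g n := by
  by_contra hcon
  push_neg at hcon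
  have hdom : ∀ g : ℕ → ℕ, ∃ f' ∈ Set.range f, ∀ᶠ n in atTop, g n ≤ f' n := by
    intro g
    obtain ⟨i, hi⟩ := hcon g
    refine ⟨f i, mem_range_self i, ?_⟩
    filter_upwards [hi] with n hn
    omega
  have h1 : dominatingNumber ≤ Cardinal.mk (Set.range f) :=
    csInf_le' ⟨Set.range f, hdom, rfl⟩
  have h2 := Cardinal.mk_range_le_lift (f := f)
  have h3 := (Cardinal.lift_le.mpr h1).trans h2
  exact absurd h (not_lt.mpr h3)

theorem stmt_0 {X : Type u} [TopologicalSpace X]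
    (hSL : ∀ U : Set (Set X), IsOpenCover U →
      ∃ V ⊆ U, V.Countable ∧ starOf (⋃₀ V) U = Set.univ)
    (Y : Set X) (hY : Cardinal.lift.{0} (Cardinal.mk Y) < Cardinal.lift.{u} dominatingNumber) :
    ∀ U : ℕ → Set (Set X), (∀ n, IsOpenCover (U n)) →
      ∃ V : ℕ → Set (Set X), (∀ n, V n ⊆ U n ∧ (V n).Finite) ∧
        ∀ F : Set X, F ⊆ Y → F.Finite → ∃ n, F ⊆ starOf (⋃₀ V n) (U n) := by
  intro U hU
  rcases isEmpty_or_nonempty X with hE | hX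
  · exact ⟨fun _ => ∅, fun n => ⟨empty_subset _, finite_empty⟩,
      fun F _ _ => ⟨0, fun x _ => (hE.false x).elim⟩⟩
  · choose V hVsub hVcnt hVstar using fun n => hSL (U n) (hU n)
    -- each V n is nonempty
    have hVne : ∀ n, (V n).Nonempty := by
      intro n
      obtain ⟨x⟩ := hX
      have hx : x ∈ starOf (⋃₀ V n) (U n) := (hVstar n).symm ▸ mem_univ x
      obtain ⟨B, ⟨-, z, hz, -⟩, -⟩ := hx
      obtain ⟨w, hw, -⟩ := hz
      exact ⟨w, hw⟩
    choose v hv using fun n => (hVcnt n).exists_eq_range (hVne n)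
    -- for each point and n, a witness index
    have hkey : ∀ (x : X) (n : ℕ), ∃ k : ℕ, x ∈ starOf (v n k) (U n) := by
      intro x n
      have hx : x ∈ starOf (⋃₀ V n) (U n) := (hVstar n).symm ▸ mem_univ x
      obtain ⟨B, ⟨hBU, z, hzV, hzB⟩, hxB⟩ := hx
      obtain ⟨w, hw, hzw⟩ := hzV
      rw [hv n] at hw
      obtain ⟨k, rfl⟩ := hw
      exact ⟨k, B, ⟨hBU, z, hzw, hzB⟩, hxB⟩
    choose k hk using hkey
    -- family indexed by finite subsets of Y
    set f : Finset ↥Y → ℕ → ℕ := fun F n => F.sup fun y => k (y : X) n with hf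
    have hcard : Cardinal.lift.{0} (Cardinal.mk (Finset ↥Y)) <
        Cardinal.lift.{u} dominatingNumber := by
      rcases finite_or_infinite ↥Y with hfin | hinf
      · haveI := hfin
        haveI := Fintype.ofFinite ↥Y
        have h1 : Cardinal.mk (Finset ↥Y) < Cardinal.aleph0 := Cardinal.lt_aleph0_of_finite _
        calc Cardinal.lift.{0} (Cardinal.mk (Finset ↥Y))
            < Cardinal.lift.{0} Cardinal.aleph0 := Cardinal.lift_lt.mpr h1
          _ = Cardinal.lift.{u} Cardinal.aleph0 := by simp
          _ ≤ Cardinal.lift.{u} dominatingNumber :=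
              Cardinal.lift_le.mpr aleph0_lt_dominatingNumber.le
      · rwa [Cardinal.mk_finset_of_infinite]
    obtain ⟨g, hg⟩ := exists_unbounded f hcard
    refine ⟨fun n => v n '' {i | i ≤ g n}, ?_, ?_⟩
    · intro n
      constructor
      · intro w hw
        obtain ⟨i, -, rfl⟩ := hw
        exact hVsub n ((hv n) ▸ mem_range_self i)
      · exact (Set.finite_Iic (g n)).image _
    · intro F hFY hFfin
      have hT : {y : ↥Y | (y : X) ∈ F}.Finite :=
        hFfin.preimage (Subtype.coe_injective.injOn)
      set F' : Finset ↥Y := hT.toFinset with hF'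
      obtain ⟨n, hn⟩ := (hg F').exists
      refine ⟨n, fun x hx => ?_⟩
      have hxY : x ∈ Y := hFY hx
      have hmem : (⟨x, hxY⟩ : ↥Y) ∈ F' := by
        simp only [hF', Set.Finite.mem_toFinset, mem_setOf_eq]
        exact hx
      have hkle : k x n ≤ g n :=
        le_of_lt (lt_of_le_of_lt (Finset.le_sup (f := fun y : ↥Y => k (y : X) n) hmem) hn)
      obtain ⟨B, ⟨hBU, z, hz1, hz2⟩, hxB⟩ := hk x n
      exact ⟨B, ⟨hBU, z, ⟨v n (k x n), ⟨k x n, hkle, rfl⟩, hz1⟩, hz2⟩, hxB⟩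
end

section
/- Every strongly star-Lindelöf space of cardinality less than 𝔡 is strongly star-Scheepers. -/
open Set

universe u

lemma starOf_mono' {X : Type*} {A A' : Set X} (h : A ⊆ A') (U : Set (Set X)) :
    starOf A U ⊆ starOf A' U := by
  apply sUnion_subset_sUnion
  rintro B ⟨hB, x, hx⟩
  exact ⟨hB, x, h hx.1, hx.2⟩

lemma not_dominating_of_countable {D : Set (ℕ → ℕ)} (hD : D.Countable) :
    ¬ ∀ g : ℕ → ℕ, ∃ f ∈ D, ∀ᶠ n in Filter.atTop, g n ≤ f n := by
  intro h
  rcases D.eq_empty_or_nonempty with rfl | hne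
  · obtain ⟨f, hf, -⟩ := h 0
    exact hf
  · obtain ⟨e, he⟩ := Set.Countable.exists_eq_range hD hne
    obtain ⟨f, hfD, hf⟩ := h (fun n => (Finset.range (n+1)).sup (fun i => e i n) + 1)
    rw [he] at hfD
    obtain ⟨i, rfl⟩ := hfD
    obtain ⟨N, hN⟩ := Filter.eventually_atTop.mp hf
    have h1 := hN (max N i) (le_max_left _ _)
    have h2 : e i (max N i) ≤ (Finset.range (max N i + 1)).sup (fun j => e j (max N i)) :=
      Finset.le_sup (f := fun j => e j (max N i))
        (Finset.mem_range.mpr (Nat.lt_succ_of_le (le_max_right N i)))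
    omega

lemma aleph0_le_dominatingNumber : Cardinal.aleph0 ≤ dominatingNumber := by
  apply le_csInf
  · exact ⟨Cardinal.mk (univ : Set (ℕ → ℕ)), univ,
      fun g => ⟨g, mem_univ g, Filter.Eventually.of_forall fun n => le_rfl⟩, rfl⟩
  · rintro c ⟨D, hdom, rfl⟩
    by_contra hlt
    push_neg at hlt
    exact not_dominating_of_countable
      ((Cardinal.lt_aleph0_iff_set_finite.mp hlt).countable) hdom

lemma exists_escape {D : Set (ℕ → ℕ)} (h : Cardinal.mk D < dominatingNumber) :
    ∃ g : ℕ → ℕ, ∀ f ∈ D, ∃ᶠ n in Filter.atTop, f n < g n := by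
  by_contra hc
  push_neg at hc
  have hdom : ∀ g : ℕ → ℕ, ∃ f ∈ D, ∀ᶠ n in Filter.atTop, g n ≤ f n := by
    intro g
    obtain ⟨f, hfD, hf⟩ := hc g
    exact ⟨f, hfD, hf⟩
  have hmem : Cardinal.mk D ∈ { c | ∃ D : Set (ℕ → ℕ),
      (∀ g : ℕ → ℕ, ∃ f ∈ D, ∀ᶠ n in Filter.atTop, g n ≤ f n) ∧ c = Cardinal.mk D } :=
    ⟨D, hdom, rfl⟩
  exact absurd (csInf_le' hmem) (not_le.mpr h)

theorem stmt_3 {X : Type u} [TopologicalSpace X]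
    (hSSL : ∀ U : Set (Set X), IsOpenCover U →
      ∃ A : Set X, A.Countable ∧ starOf A U = Set.univ)
    (hcard : Cardinal.lift.{0} (Cardinal.mk X) < Cardinal.lift.{u} dominatingNumber) :
    StronglyStarScheepers X := by
  intro U hU
  rcases isEmpty_or_nonempty X with hX | hX
  · exact ⟨fun _ => ∅, fun _ => finite_empty,
      fun G _ => ⟨0, fun x _ => (IsEmpty.false x).elim⟩⟩
  obtain ⟨x0⟩ := hX
  choose A hAc hAstar using fun n => hSSL (U n) (hU n)
  have hA'c : ∀ n, (insert x0 (A n) : Set X).Countable := fun n => (hAc n).insert x0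
  have hA'ne : ∀ n, (insert x0 (A n) : Set X).Nonempty := fun n => ⟨x0, mem_insert _ _⟩
  choose e he using fun n => Set.Countable.exists_eq_range (hA'c n) (hA'ne n)
  have hkey : ∀ (x : X) (n : ℕ), ∃ k, x ∈ starOf {e n k} (U n) := by
    intro x n
    have hx : x ∈ starOf (insert x0 (A n)) (U n) :=
      starOf_mono' (subset_insert _ _) _ (by rw [hAstar n]; exact mem_univ x)
    simp only [starOf, mem_sUnion, mem_setOf_eq] at hx ⊢
    obtain ⟨B, ⟨hBU, y, hyA, hyB⟩, hxB⟩ := hx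
    rw [he n] at hyA
    obtain ⟨k, rfl⟩ := hyA
    exact ⟨k, B, ⟨hBU, e n k, mem_singleton _, hyB⟩, hxB⟩
  choose fx hfx using hkey
  set Ffun : Finset X → ℕ → ℕ := fun G n => G.sup (fun x => fx x n) with hFfun
  have hDcard : Cardinal.mk (Set.range Ffun) < dominatingNumber := by
    rcases finite_or_infinite X with hfin | hinf
    · haveI := Fintype.ofFinite X
      have : (Set.range Ffun).Finite := Set.finite_range Ffun
      exact lt_of_lt_of_le (Cardinal.lt_aleph0_iff_set_finite.mpr this)
        aleph0_le_dominatingNumber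
    · have h1 : Cardinal.lift.{u} (Cardinal.mk (Set.range Ffun)) ≤
          Cardinal.lift.{0} (Cardinal.mk (Finset X)) := Cardinal.mk_range_le_lift
      rw [Cardinal.mk_finset_of_infinite] at h1
      exact Cardinal.lift_lt.mp (lt_of_le_of_lt h1 hcard)
  obtain ⟨g, hg⟩ := exists_escape hDcard
  refine ⟨fun n => (e n) '' {k | k < g n}, fun n => (Set.finite_Iio (g n)).image _, ?_⟩
  intro G hG
  obtain ⟨n, hn⟩ := (hg (Ffun hG.toFinset) ⟨hG.toFinset, rfl⟩).exists
  refine ⟨n, fun x hx => ?_⟩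
  have hxk := hfx x n
  have hmem : e n (fx x n) ∈ (e n) '' {k | k < g n} := by
    have hle : fx x n ≤ Ffun hG.toFinset n :=
      Finset.le_sup (f := fun x => fx x n) (hG.mem_toFinset.mpr hx)
    exact ⟨fx x n, lt_of_le_of_lt hle hn, rfl⟩
  exact starOf_mono' (singleton_subset_iff.mpr hmem) _ hxk
end
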